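/- Let n ≥ 1 and let F be the field of fractions of the polynomial ring over ℤ in the 3n variables X₁,…,Xₙ, Z₁,…,Zₙ, W₁,…,Wₙ. For each choice of signs σ : {1,…,n} → {+1,−1}, set Mᵢ = E(Zᵢ,Wᵢ)·T(Xᵢ) if σ(i)=+1 and Mᵢ = E(Zᵢ,Wᵢ)·T(Xᵢ)⁻¹ if σ(i)=−1. Then the trace of the product M₁·M₂·⋯·Mₙ belongs to the subsemiring of F generated by the 3n variables and their inverses; that is, the trace is a Laurent polynomial in the variables Xᵢ, Zᵢ, Wᵢ with nonnegative integer coefficients. -/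

import Mathlib

open Matrix

/-- The matrix `T(X)` with rows `(0,0,1)`, `(0,-1,-1)`, `(X, 1+X, 1)`. -/
def Tmat {K : Type*} [Field K] (X : K) : Matrix (Fin 3) (Fin 3) K :=
  !![0, 0, 1; 0, -1, -1; X, 1 + X, 1]

/-- The matrix `E(Z,W)` with rows `(0,0,Z⁻¹)`, `(0,-1,0)`, `(W,0,0)`. -/
noncomputable def Emat {K : Type*} [Field K] (Z W : K) : Matrix (Fin 3) (Fin 3) K :=
  !![0, 0, Z⁻¹; 0, -1, 0; W, 0, 0]


/-!
Both `E(Z,W)·T(X)` and `E(Z,W)·T(X)⁻¹` have entries built from `1`, `X`, `X⁻¹`, `Z⁻¹`, `W` by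
sums and products only (`det T(X) = X`, so inverting `T(X)` only introduces `X⁻¹`). Hence every
factor lies in the subsemiring of matrices with entries in the semiring generated by the
variables and their inverses, so does their product, and its trace is a sum of its diagonal entries.
-/

section
variable {K : Type*} [Field K]

theorem Emat_mul_Tmat (Z W X : K) :
    Emat Z W * Tmat X = !![X * Z⁻¹, (1 + X) * Z⁻¹, Z⁻¹; 0, 1, 1; 0, 0, W] := by
  simp only [Emat, Tmat, mul_fin_three]
  congr <;> ring

theorem Tmat_inv {X : K} (hX : X ≠ 0) :
    (Tmat X)⁻¹ = !![1, (1 + X) * X⁻¹, X⁻¹; -1, -1, 0; 1, 0, 0] := by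
  refine inv_eq_left_inv ?_
  simp only [Tmat, mul_fin_three, one_fin_three]
  congr <;> field_simp <;> ring

theorem Emat_mul_Tmat_inv (Z W : K) {X : K} (hX : X ≠ 0) :
    Emat Z W * (Tmat X)⁻¹ = !![Z⁻¹, 0, 0; 1, 1, 0; W, W * ((1 + X) * X⁻¹), W * X⁻¹] := by
  simp only [Tmat_inv hX, Emat, mul_fin_three]
  congr <;> ring

variable (S : Subsemiring K) {X Z W : K}

theorem Emat_mul_Tmat_mem_matrix (hX : X ∈ S) (hZ : Z⁻¹ ∈ S) (hW : W ∈ S) :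
    Emat Z W * Tmat X ∈ S.matrix := by
  rw [Emat_mul_Tmat]
  intro i j
  fin_cases i <;> fin_cases j <;> simp <;>
    solve_by_elim [S.mul_mem, S.add_mem, S.one_mem, S.zero_mem]

theorem Emat_mul_Tmat_inv_mem_matrix (hX₀ : X ≠ 0) (hX : X ∈ S) (hX' : X⁻¹ ∈ S)
    (hZ : Z⁻¹ ∈ S) (hW : W ∈ S) : Emat Z W * (Tmat X)⁻¹ ∈ S.matrix := by
  rw [Emat_mul_Tmat_inv _ _ hX₀]
  intro i j
  fin_cases i <;> fin_cases j <;> simp <;>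
    solve_by_elim (maxDepth := 10) [S.mul_mem, S.add_mem, S.one_mem, S.zero_mem]

end

theorem trace_prod_mem_closure_of_vars_general (n : ℕ) (σ : Fin n → Bool) :
    letI F := FractionRing (MvPolynomial (Fin n × Fin 3) ℤ)
    letI v : Fin n × Fin 3 → F :=
      fun p => algebraMap (MvPolynomial (Fin n × Fin 3) ℤ) F (MvPolynomial.X p)
    letI M : Fin n → Matrix (Fin 3) (Fin 3) F :=
      fun i => if σ i then Emat (v (i, 1)) (v (i, 2)) * Tmat (v (i, 0))
               else Emat (v (i, 1)) (v (i, 2)) * (Tmat (v (i, 0)))⁻¹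
    (List.ofFn M).prod.trace ∈
      Subsemiring.closure (Set.range v ∪ Set.range fun p => (v p)⁻¹) := by
  set F := FractionRing (MvPolynomial (Fin n × Fin 3) ℤ)
  set v : Fin n × Fin 3 → F :=
    fun p => algebraMap (MvPolynomial (Fin n × Fin 3) ℤ) F (MvPolynomial.X p)
  set M : Fin n → Matrix (Fin 3) (Fin 3) F :=
    fun i => if σ i then Emat (v (i, 1)) (v (i, 2)) * Tmat (v (i, 0))
             else Emat (v (i, 1)) (v (i, 2)) * (Tmat (v (i, 0)))⁻¹
  set S := Subsemiring.closure (Set.range v ∪ Set.range fun p => (v p)⁻¹)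
  have hv : ∀ p, v p ∈ S := fun p => Subsemiring.subset_closure (.inl ⟨p, rfl⟩)
  have hv_inv : ∀ p, (v p)⁻¹ ∈ S := fun p => Subsemiring.subset_closure (.inr ⟨p, rfl⟩)
  have hv_ne : ∀ p, v p ≠ 0 := fun p =>
    (map_ne_zero_iff _ (IsFractionRing.injective _ F)).mpr (MvPolynomial.X_ne_zero p)
  have hM : ∀ i, M i ∈ S.matrix := fun i => by
    dsimp only [M]
    split
    · exact Emat_mul_Tmat_mem_matrix S (hv _) (hv_inv _) (hv _)
    · exact Emat_mul_Tmat_inv_mem_matrix S (hv_ne _) (hv _) (hv_inv _) (hv_inv _) (hv _)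
  have hprod : (List.ofFn M).prod ∈ S.matrix :=
    list_prod_mem (List.forall_mem_ofFn_iff.mpr hM)
  exact sum_mem fun i _ => hprod i i

/-- Let `F` be the field of fractions of the polynomial ring over `ℤ` in the `3n`
variables `Xᵢ, Zᵢ, Wᵢ` (`i < n`, encoded as pairs in `Fin n × Fin 3`).  For any choice of
signs `σ`, let `Mᵢ = E(Zᵢ,Wᵢ)·T(Xᵢ)` if `σ i` and `Mᵢ = E(Zᵢ,Wᵢ)·T(Xᵢ)⁻¹` otherwise.
Then the trace of `M₀ ⋯ M_{n-1}` lies in the subsemiring of `F` generated by the `3n`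
variables and their inverses, i.e. it is a Laurent polynomial in the variables with
nonnegative integer coefficients. -/
theorem trace_prod_mem_closure_of_vars (n : ℕ) (hn : 1 ≤ n) (σ : Fin n → Bool) :
    letI F := FractionRing (MvPolynomial (Fin n × Fin 3) ℤ)
    letI v : Fin n × Fin 3 → F :=
      fun p => algebraMap (MvPolynomial (Fin n × Fin 3) ℤ) F (MvPolynomial.X p)
    letI M : Fin n → Matrix (Fin 3) (Fin 3) F :=
      fun i => if σ i then Emat (v (i, 1)) (v (i, 2)) * Tmat (v (i, 0))
               else Emat (v (i, 1)) (v (i, 2)) * (Tmat (v (i, 0)))⁻¹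
    (List.ofFn M).prod.trace ∈
      Subsemiring.closure (Set.range v ∪ Set.range fun p => (v p)⁻¹) :=
  trace_prod_mem_closure_of_vars_general n σ
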